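/- Let G be a network with request R and extended graph G_ext. Let x : S → {0,1} and f : E_ext → ℕ satisfy (IP-1) f(δ⁺_{E_ext}(v)) = f(δ⁻_{E_ext}(v)) for all v ∈ V_G, (IP-2) f(δ⁺_{E_R}(W)) ≥ x_s for all W ⊆ V_G and s ∈ W∩S, and (IP-5) f(s,o⁻_S) ≤ u_S(s)·x_s for all s ∈ S. Then for every node t ∈ S∪T with f(o⁺,t) ≥ 1 there exists a directed path ⟨o⁺, t, …, o⁻_r⟩ in the support graph G^f_ext, i.e., a path starting with the edge (o⁺,t) and ending at the super sink o⁻_r all of whose edges carry positive flow. -/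

import Mathlib

/-! Formalization of the Constrained Virtual Steiner Arborescence Problem (CVSAP),
its single-commodity flow IP formulation, and related notions. -/

/-- Vertices of the extended graph: original vertices plus super source `src`,
super sink `sinkS` for Steiner nodes and super sink `sinkR` for the root. -/
inductive ExtV (V : Type) where
  | orig : V → ExtV V
  | src : ExtV V
  | sinkS : ExtV V
  | sinkR : ExtV V
deriving DecidableEq

open ExtV

/-- A (finite) capacitated directed network. -/
structure Network (V : Type) [DecidableEq V] where
  E : Finset (V × V)
  uE : V × V → ℕ
  cE : V × V → ℝ

/-- A request `R = (root, S, T, u_r, c_S, u_S)`. -/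
structure Request (V : Type) [DecidableEq V] where
  root : V
  S : Finset V
  T : Finset V
  ur : ℕ
  cS : V → ℝ
  uS : V → ℕ

variable {V : Type} [DecidableEq V]

/-- Well-formedness: root is neither terminal nor Steiner site, Steiner sites and terminals
are disjoint, and all costs are positive. -/
def RequestWF (N : Network V) (R : Request V) : Prop :=
  R.root ∉ R.T ∧ R.root ∉ R.S ∧ Disjoint R.S R.T ∧
    (∀ s ∈ R.S, 0 < R.cS s) ∧ (∀ e ∈ N.E, 0 < N.cE e)

/-- Edge set of the extended graph `G_ext`. -/
def Eext (N : Network V) (R : Request V) : Finset (ExtV V × ExtV V) :=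
  (N.E.image fun e => (orig e.1, orig e.2)) ∪
    ({(orig R.root, sinkR)} : Finset (ExtV V × ExtV V)) ∪
    (R.S.image fun s => (orig s, sinkS)) ∪
    (R.S.image fun s => (src, orig s)) ∪
    (R.T.image fun t => (src, orig t))

/-- `E_R`: the extended edges without the edges into the Steiner super sink. -/
def ERext (N : Network V) (R : Request V) : Finset (ExtV V × ExtV V) :=
  (Eext N R).filter fun e => e.2 ≠ sinkS

/-- Edges of `F` leaving node `v`. -/
def outV (F : Finset (ExtV V × ExtV V)) (v : ExtV V) : Finset (ExtV V × ExtV V) :=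
  F.filter fun e => e.1 = v

/-- Edges of `F` entering node `v`. -/
def inV (F : Finset (ExtV V × ExtV V)) (v : ExtV V) : Finset (ExtV V × ExtV V) :=
  F.filter fun e => e.2 = v

/-- Edges of `F` leaving the node set `W`. -/
def outSet (F : Finset (ExtV V × ExtV V)) (W : Finset (ExtV V)) : Finset (ExtV V × ExtV V) :=
  F.filter fun e => e.1 ∈ W ∧ e.2 ∉ W

/-- Total flow of `f` on the edge set `F`. -/
def fSum (f : ExtV V × ExtV V → ℕ) (F : Finset (ExtV V × ExtV V)) : ℕ :=
  ∑ e ∈ F, f e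

/-- Embedding of a set of original nodes into the extended graph. -/
def extW (W : Finset V) : Finset (ExtV V) := W.image orig

/-- A walk in the support graph `G^f_ext`: consecutive nodes are joined by extended
edges carrying positive flow. -/
def IsSupportWalk (N : Network V) (R : Request V) (f : ExtV V × ExtV V → ℕ)
    (p : List (ExtV V)) : Prop :=
  p.Chain' fun a b => (a, b) ∈ Eext N R ∧ 1 ≤ f (a, b)

/-- (IP-1): flow conservation at all original nodes. -/
def IP1 (N : Network V) (R : Request V) (f : ExtV V × ExtV V → ℕ) : Prop :=
  ∀ v : V, fSum f (outV (Eext N R) (orig v)) = fSum f (inV (Eext N R) (orig v))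

/-- (IP-2): connectivity inequalities for activated Steiner sites. -/
def IP2 (N : Network V) (R : Request V) (x : V → ℕ) (f : ExtV V × ExtV V → ℕ) : Prop :=
  ∀ W : Finset V, ∀ s ∈ W, s ∈ R.S → x s ≤ fSum f (outSet (ERext N R) (extW W))

/-- (IP-3): directed Steiner cuts for terminals. -/
def IP3 (N : Network V) (R : Request V) (f : ExtV V × ExtV V → ℕ) : Prop :=
  ∀ W : Finset V, (W ∩ R.T).Nonempty → 1 ≤ fSum f (outSet (ERext N R) (extW W))

/-- Feasibility for the integer program IP-A-CVSAP. -/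
def IPFeasible (N : Network V) (R : Request V) (x : V → ℕ) (f : ExtV V × ExtV V → ℕ) : Prop :=
  (∀ s ∈ R.S, x s ≤ 1) ∧
  IP1 N R f ∧
  IP2 N R x f ∧
  IP3 N R f ∧
  (∀ s ∈ R.S, x s ≤ f (orig s, sinkS)) ∧
  (∀ s ∈ R.S, f (orig s, sinkS) ≤ R.uS s * x s) ∧
  f (orig R.root, sinkR) ≤ R.ur ∧
  (∀ e ∈ N.E, f (orig e.1, orig e.2) ≤ N.uE e) ∧
  (∀ t ∈ R.T, f (src, orig t) = 1) ∧
  (∀ s ∈ R.S, f (src, orig s) = x s)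

/-- Objective value of IP-A-CVSAP. -/
noncomputable def costIP (N : Network V) (R : Request V) (x : V → ℕ)
    (f : ExtV V × ExtV V → ℕ) : ℝ :=
  ∑ e ∈ N.E, N.cE e * f (orig e.1, orig e.2) + ∑ s ∈ R.S, R.cS s * x s

/-- A Virtual Arborescence: nodes, virtual edges and the mapping of virtual edges
onto paths in the underlying graph. -/
structure VirtArb (V : Type) where
  VT : Finset V
  ET : Finset (V × V)
  pi : V × V → List V

/-- `p` is a simple directed path in `N` from `u` to `v`. -/
def IsPathInG (N : Network V) (p : List V) (u v : V) : Prop :=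
  p.Chain' (fun a b => (a, b) ∈ N.E) ∧ p.head? = some u ∧ p.getLast? = some v ∧ p.Nodup

/-- The virtual edges whose path uses the edge `e` of the underlying graph. -/
def pathUses (TA : VirtArb V) (e : V × V) : Finset (V × V) :=
  TA.ET.filter fun d => e ∈ (TA.pi d).zip (TA.pi d).tail

/-- `|π(E_T)[e]|`: the number of paths of the virtual arborescence using edge `e`. -/
def pathCount (TA : VirtArb V) (e : V × V) : ℕ := (pathUses TA e).card

/-- Total degree of node `v` with respect to the virtual edge set `ET`. -/
def degTotal (ET : Finset (V × V)) (v : V) : ℕ :=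
  (ET.filter fun e => e.1 = v).card + (ET.filter fun e => e.2 = v).card

/-- `(VT, ET, r)` is an arborescence rooted at `r` with all edges oriented towards `r`. -/
def ArborTowards (VT : Finset V) (ET : Finset (V × V)) (r : V) : Prop :=
  (∀ e ∈ ET, e.1 ∈ VT ∧ e.2 ∈ VT ∧ e.1 ≠ e.2) ∧
  (∀ v ∈ VT, v ≠ r → (ET.filter fun e => e.1 = v).card = 1) ∧
  (∀ e ∈ ET, e.1 ≠ r) ∧
  (∀ v ∈ VT, ∃ p : List V, p.Chain' (fun a b => (a, b) ∈ ET) ∧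
      p.head? = some v ∧ p.getLast? = some r)

/-- `(VT, ET, r)` is an arborescence rooted at `r` with all edges oriented away from `r`. -/
def ArborAway (VT : Finset V) (ET : Finset (V × V)) (r : V) : Prop :=
  (∀ e ∈ ET, e.1 ∈ VT ∧ e.2 ∈ VT ∧ e.1 ≠ e.2) ∧
  (∀ v ∈ VT, v ≠ r → (ET.filter fun e => e.2 = v).card = 1) ∧
  (∀ e ∈ ET, e.2 ≠ r) ∧
  (∀ v ∈ VT, ∃ p : List V, p.Chain' (fun a b => (a, b) ∈ ET) ∧
      p.head? = some r ∧ p.getLast? = some v)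

/-- Feasible solutions of A-CVSAP: all arborescence edges oriented towards the root. -/
def FeasibleACVSAP (N : Network V) (R : Request V) (TA : VirtArb V) : Prop :=
  R.root ∈ TA.VT ∧
  ArborTowards TA.VT TA.ET R.root ∧
  (∀ d ∈ TA.ET, IsPathInG N (TA.pi d) d.1 d.2) ∧
  R.T ⊆ TA.VT ∧
  TA.VT ⊆ insert R.root (R.S ∪ R.T) ∧
  (∀ t ∈ R.T, degTotal TA.ET t = 1) ∧
  degTotal TA.ET R.root ≤ R.ur ∧
  (∀ s ∈ R.S, s ∈ TA.VT → degTotal TA.ET s ≤ R.uS s + 1) ∧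
  (∀ e ∈ N.E, pathCount TA e ≤ N.uE e)

/-- Feasible solutions of M-CVSAP: all arborescence edges oriented away from the root. -/
def FeasibleMCVSAP (N : Network V) (R : Request V) (TA : VirtArb V) : Prop :=
  R.root ∈ TA.VT ∧
  ArborAway TA.VT TA.ET R.root ∧
  (∀ d ∈ TA.ET, IsPathInG N (TA.pi d) d.1 d.2) ∧
  R.T ⊆ TA.VT ∧
  TA.VT ⊆ insert R.root (R.S ∪ R.T) ∧
  (∀ t ∈ R.T, degTotal TA.ET t = 1) ∧
  degTotal TA.ET R.root ≤ R.ur ∧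
  (∀ s ∈ R.S, s ∈ TA.VT → degTotal TA.ET s ≤ R.uS s + 1) ∧
  (∀ e ∈ N.E, pathCount TA e ≤ N.uE e)

/-- Cost of a virtual arborescence. -/
noncomputable def costCVSAP (N : Network V) (R : Request V) (TA : VirtArb V) : ℝ :=
  ∑ e ∈ N.E, N.cE e * pathCount TA e + ∑ s ∈ R.S.filter (· ∈ TA.VT), R.cS s

/-! If `o⁻_r` were not reachable from `t` in the support graph, let `W` be the set of original
nodes reachable from `t`. Positive flow leaves `W` only along edges into `o⁻_S`, so the `E_R`-cut
of `W` carries no flow; (IP-2) then forces `x_s = 0` for every Steiner site `s ∈ W`, and (IP-5)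
empties the edges `(s, o⁻_S)` too. Summing (IP-1) over `W`, the flow entering `W` equals the flow
leaving it, which is zero, contradicting `f(o⁺, t) ≥ 1`. A walk to `o⁻_r` shortcuts to a path,
and `o⁺` does not reoccur on it because no edge enters `o⁺`. -/

theorem List.exists_isChain_cons_nodup_of_relationReflTransGen {α : Type*}
    {r : α → α → Prop} {a b : α} (h : Relation.ReflTransGen r a b) :
    ∃ l, (a :: l).IsChain r ∧ (a :: l).getLast? = some b ∧ (a :: l).Nodup := by
  induction h using Relation.ReflTransGen.head_induction_on with
  | refl => exact ⟨[], .singleton _, rfl, List.nodup_singleton _⟩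
  | @head a c hac _ ih =>
    obtain ⟨l, hchain, hlast, hnodup⟩ := ih
    by_cases ha : a ∈ c :: l
    · obtain ⟨l₁, l₂, hsplit⟩ := List.append_of_mem ha
      rw [hsplit] at hchain hlast hnodup
      refine ⟨l₂, hchain.suffix (List.suffix_append _ _), ?_,
        hnodup.sublist (List.sublist_append_right _ _)⟩
      rwa [List.getLast?_append_of_ne_nil _ (List.cons_ne_nil _ _)] at hlast
    · exact ⟨c :: l, hchain.cons_cons hac, by rwa [List.getLast?_cons_cons],
        List.nodup_cons.2 ⟨ha, hnodup⟩⟩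

theorem Finset.sum_inflow_eq_zero_of_outflow_eq_zero {α : Type*} [DecidableEq α]
    {E : Finset (α × α)} {f : α × α → ℕ} {W : Finset α}
    (hcons : ∀ v ∈ W, ∑ e ∈ E with e.1 = v, f e = ∑ e ∈ E with e.2 = v, f e)
    (hout : ∀ e ∈ E, e.1 ∈ W → e.2 ∉ W → f e = 0) :
    ∑ e ∈ E with e.2 ∈ W ∧ e.1 ∉ W, f e = 0 := by
  have hbalance : ∑ e ∈ E with e.1 ∈ W, f e = ∑ e ∈ E with e.2 ∈ W, f e := by
    rw [← Finset.sum_fiberwise_eq_sum_filter, ← Finset.sum_fiberwise_eq_sum_filter]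
    exact Finset.sum_congr rfl hcons
  have hsplit : ∀ (p q : α × α → Prop) [DecidablePred p] [DecidablePred q],
      ∑ e ∈ E with p e, f e =
        ∑ e ∈ E with p e ∧ q e, f e + ∑ e ∈ E with p e ∧ ¬ q e, f e := by
    intro p q _ _
    rw [← Finset.filter_filter, ← Finset.filter_filter, Finset.sum_filter_add_sum_filter_not]
  have hleave : ∑ e ∈ E with e.1 ∈ W ∧ e.2 ∉ W, f e = 0 :=
    Finset.sum_eq_zero fun e he => by
      obtain ⟨he, h₁, h₂⟩ := Finset.mem_filter.1 he
      exact hout e he h₁ h₂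
  have hinside : ∑ e ∈ E with e.2 ∈ W ∧ e.1 ∈ W, f e =
      ∑ e ∈ E with e.1 ∈ W ∧ e.2 ∈ W, f e := by
    simp only [and_comm]
  rw [hsplit (·.1 ∈ W) (·.2 ∈ W), hsplit (·.2 ∈ W) (·.1 ∈ W), hleave, hinside]
    at hbalance
  omega

def SupportAdj (N : Network V) (R : Request V) (f : ExtV V × ExtV V → ℕ)
    (a b : ExtV V) : Prop :=
  (a, b) ∈ Eext N R ∧ 1 ≤ f (a, b)

section Eext

variable {N : Network V} {R : Request V}

theorem src_orig_mem_Eext {t : V} (ht : t ∈ R.S ∪ R.T) : (src, orig t) ∈ Eext N R := by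
  simp only [Finset.mem_union] at ht
  simp [Eext, ht]

theorem ne_src_of_mem_Eext {a b : ExtV V} (h : (a, b) ∈ Eext N R) : b ≠ src := by
  simp only [Eext, Finset.mem_union, Finset.mem_image, Finset.mem_singleton] at h
  aesop

theorem exists_mem_S_of_mem_Eext_sinkS {a : ExtV V} (h : (a, sinkS) ∈ Eext N R) :
    ∃ s ∈ R.S, a = orig s := by
  simp only [Eext, Finset.mem_union, Finset.mem_image, Finset.mem_singleton] at h
  aesop

end Eext

section Reachability

variable [Fintype V] {N : Network V} {R : Request V} {f : ExtV V × ExtV V → ℕ}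

noncomputable def reachableOrig (N : Network V) (R : Request V) (f : ExtV V × ExtV V → ℕ)
    (a : ExtV V) : Finset V :=
  open Classical in {v | Relation.ReflTransGen (SupportAdj N R f) a (orig v)}

theorem mem_reachableOrig {a : ExtV V} {v : V} :
    v ∈ reachableOrig N R f a ↔ Relation.ReflTransGen (SupportAdj N R f) a (orig v) := by
  simp [reachableOrig]

theorem flow_leaving_reachableOrig_eq_zero {x : V → ℕ} (h2 : IP2 N R x f)
    (h5 : ∀ s ∈ R.S, f (orig s, sinkS) ≤ R.uS s * x s) {a : ExtV V}
    (hunreach : ¬ Relation.ReflTransGen (SupportAdj N R f) a sinkR) :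
    ∀ e ∈ Eext N R, e.1 ∈ extW (reachableOrig N R f a) →
      e.2 ∉ extW (reachableOrig N R f a) → f e = 0 := by
  set W := reachableOrig N R f a
  have hcut_ER : ∀ e ∈ ERext N R, e.1 ∈ extW W → e.2 ∉ extW W → f e = 0 := by
    rintro ⟨u, b⟩ he hu hb
    obtain ⟨he, hsinkS⟩ := Finset.mem_filter.1 he
    obtain ⟨v, hv, rfl⟩ := Finset.mem_image.1 hu
    by_contra hf
    have hb_reach := (mem_reachableOrig.1 hv).tail ⟨he, Nat.one_le_iff_ne_zero.2 hf⟩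
    cases b with
    | orig w => exact hb (Finset.mem_image_of_mem orig (mem_reachableOrig.2 hb_reach))
    | src => exact ne_src_of_mem_Eext he rfl
    | sinkS => exact hsinkS rfl
    | sinkR => exact hunreach hb_reach
  have hx : ∀ s ∈ W, s ∈ R.S → x s = 0 := fun s hs hsS =>
    Nat.le_zero.1 <| (h2 W s hs hsS).trans_eq <| Finset.sum_eq_zero fun e he => by
      simp only [outSet, Finset.mem_filter] at he
      exact hcut_ER e he.1 he.2.1 he.2.2
  rintro ⟨u, b⟩ he hu hb
  by_cases hsinkS : b = sinkS
  · subst hsinkS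
    obtain ⟨s, hs, rfl⟩ := exists_mem_S_of_mem_Eext_sinkS he
    have hsW : s ∈ W := by simpa [extW] using hu
    simpa [hx s hsW hs] using h5 s hs
  · exact hcut_ER _ (Finset.mem_filter.2 ⟨he, hsinkS⟩) hu hb

theorem reflTransGen_supportAdj_sinkR {x : V → ℕ} (h1 : IP1 N R f) (h2 : IP2 N R x f)
    (h5 : ∀ s ∈ R.S, f (orig s, sinkS) ≤ R.uS s * x s) {t : V}
    (ht : (src, orig t) ∈ Eext N R) (hft : 1 ≤ f (src, orig t)) :
    Relation.ReflTransGen (SupportAdj N R f) (orig t) sinkR := by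
  by_contra hunreach
  set W := extW (reachableOrig N R f (orig t))
  have hcons :
      ∀ v ∈ W, ∑ e ∈ Eext N R with e.1 = v, f e = ∑ e ∈ Eext N R with e.2 = v, f e := by
    intro v hv
    obtain ⟨w, -, rfl⟩ := Finset.mem_image.1 hv
    exact h1 w
  have hin := Finset.sum_inflow_eq_zero_of_outflow_eq_zero hcons
    (flow_leaving_reachableOrig_eq_zero h2 h5 hunreach)
  have htW : orig t ∈ W := Finset.mem_image_of_mem orig (mem_reachableOrig.2 .refl)
  have hsrcW : src ∉ W := by simp [W, extW]
  have := (Finset.sum_eq_zero_iff.1 hin) _ (Finset.mem_filter.2 ⟨ht, htW, hsrcW⟩)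
  omega

end Reachability

theorem exists_path_to_root_sink_general [Fintype V] (N : Network V) (R : Request V)
    (x : V → ℕ) (f : ExtV V × ExtV V → ℕ)
    (h1 : IP1 N R f) (h2 : IP2 N R x f)
    (h5 : ∀ s ∈ R.S, f (ExtV.orig s, ExtV.sinkS) ≤ R.uS s * x s)
    (t : V) (ht : t ∈ R.S ∪ R.T) (hft : 1 ≤ f (ExtV.src, ExtV.orig t)) :
    ∃ p : List (ExtV V),
      IsSupportWalk N R f (ExtV.src :: ExtV.orig t :: p) ∧
      (ExtV.src :: ExtV.orig t :: p).getLast? = some ExtV.sinkR ∧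
      (ExtV.src :: ExtV.orig t :: p).Nodup := by
  have hsrc := src_orig_mem_Eext (N := N) ht
  obtain ⟨p, hchain, hlast, hnodup⟩ := List.exists_isChain_cons_nodup_of_relationReflTransGen
    (reflTransGen_supportAdj_sinkR h1 h2 h5 hsrc hft)
  have hsrc_notMem : src ∉ orig t :: p := fun hmem =>
    hchain.induction (· ≠ src) _ (fun _ _ hadj _ => ne_src_of_mem_Eext hadj.1)
      (fun _ => by simp) src hmem rfl
  exact ⟨p, hchain.cons_cons ⟨hsrc, hft⟩, by rwa [List.getLast?_cons_cons],
    List.nodup_cons.2 ⟨hsrc_notMem, hnodup⟩⟩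

theorem exists_path_to_root_sink [Fintype V] (N : Network V) (R : Request V)
    (hWF : RequestWF N R) (x : V → ℕ) (f : ExtV V × ExtV V → ℕ)
    (hf0 : ∀ e ∉ Eext N R, f e = 0)
    (h1 : IP1 N R f) (h2 : IP2 N R x f)
    (h5 : ∀ s ∈ R.S, f (ExtV.orig s, ExtV.sinkS) ≤ R.uS s * x s)
    (t : V) (ht : t ∈ R.S ∪ R.T) (hft : 1 ≤ f (ExtV.src, ExtV.orig t)) :
    ∃ p : List (ExtV V),
      IsSupportWalk N R f (ExtV.src :: ExtV.orig t :: p) ∧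
      (ExtV.src :: ExtV.orig t :: p).getLast? = some ExtV.sinkR ∧
      (ExtV.src :: ExtV.orig t :: p).Nodup :=
  exists_path_to_root_sink_general N R x f h1 h2 h5 t ht hft
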